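/- Suppose f ∈ ind_Ū^G(Ψ̄)^K, where Ψ is a nondegenerate character of Ū of conductor 𝔭. Then for every μ ∈ X_*(A) that is not strictly dominant, f(m_μ) = 0. Consequently (using the Iwasawa decomposition G = ŪMK) the set {φ_λ : λ ∈ X_*(A)^{++}} is a ℂ-basis of ind_Ū^G(Ψ̄)^K. -/

import Mathlib

open Pointwise

/-!
A vector `f` of `ind_Ū^G(Ψ̄)^K` is determined, by the Iwasawa decomposition, by its values
`f(m_μ)`. If `⟨α, μ⟩ ≤ 0` for a simple root `α`, pick `u ∈ U_{-α} ∩ K` with `Ψ(u) ≠ 1`;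
then `m_μ⁻¹ u m_μ ∈ U_{-α} ∩ K`, so `Ψ̄(u) f(m_μ) = f(u m_μ) = f(m_μ · m_μ⁻¹ u m_μ) = f(m_μ)`
forces `f(m_μ) = 0`. Hence `f` is supported on the double cosets `Ū m_λ K` with `λ` strictly
dominant, finitely many by compactness of the support, and on each of them `f` is a multiple
of `φ_λ`.
-/

section Equivariant

variable {G R : Type*} [Group G] [Field R]

def biEquivariantFunctions (U K : Subgroup G) (χ : G → R) : Submodule R (G → R) where
  carrier := {f | (∀ u ∈ U, ∀ g, f (u * g) = χ u * f g) ∧ ∀ k ∈ K, ∀ g, f (g * k) = f g}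
  zero_mem' := by simp
  add_mem' := by
    rintro f f' ⟨hfU, hfK⟩ ⟨hf'U, hf'K⟩
    refine ⟨fun u hu g => ?_, fun k hk g => ?_⟩
    · simp only [Pi.add_apply, hfU u hu, hf'U u hu]; ring
    · simp only [Pi.add_apply, hfK k hk, hf'K k hk]
  smul_mem' := by
    rintro c f ⟨hfU, hfK⟩
    refine ⟨fun u hu g => ?_, fun k hk g => ?_⟩
    · simp only [Pi.smul_apply, smul_eq_mul, hfU u hu]; ring
    · simp only [Pi.smul_apply, hfK k hk]

variable {U K : Subgroup G} {χ : G → R} {f : G → R}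

theorem biEquivariantFunctions.apply_eq_zero_of_conj_mem (hf : f ∈ biEquivariantFunctions U K χ)
    {u g : G} (hu : u ∈ U) (hχu : χ u ≠ 1) (hconj : g⁻¹ * u * g ∈ K) : f g = 0 := by
  have hfixed : χ u * f g = f g := by
    rw [← hf.1 u hu, ← hf.2 _ hconj g]
    group
  have : (χ u - 1) * f g = 0 := by rw [sub_mul, hfixed]; ring
  exact (mul_eq_zero.mp this).resolve_left (sub_ne_zero.mpr hχu)

theorem biEquivariantFunctions.eq_zero_of_apply_eq_zero {ι : Type*} {x : ι → G}
    (hUxK : ∀ g : G, ∃ u ∈ U, ∃ i, ∃ k ∈ K, g = u * x i * k)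
    (hf : f ∈ biEquivariantFunctions U K χ) (hx : ∀ i, f (x i) = 0) : f = 0 := by
  funext g
  obtain ⟨u, hu, i, k, hk, rfl⟩ := hUxK g
  rw [mul_assoc, hf.1 u hu, hf.2 k hk, hx i, mul_zero, Pi.zero_apply]

theorem biEquivariantFunctions.eq_sum_of_apply_eq_ite {ι : Type*} [DecidableEq ι] {x : ι → G}
    (hUxK : ∀ g : G, ∃ u ∈ U, ∃ i, ∃ k ∈ K, g = u * x i * k) {v : ι → G → R} {d : ι → R}
    {s : Finset ι} (hd : ∀ j ∈ s, d j ≠ 0) (hv : ∀ j ∈ s, v j ∈ biEquivariantFunctions U K χ)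
    (hvx : ∀ j ∈ s, ∀ i, v j (x i) = if i = j then d j else 0)
    (hf : f ∈ biEquivariantFunctions U K χ) (hfs : ∀ i ∉ s, f (x i) = 0) :
    f = ∑ j ∈ s, (f (x j) / d j) • v j := by
  rw [← sub_eq_zero]
  refine eq_zero_of_apply_eq_zero hUxK
    (sub_mem hf (Submodule.sum_mem _ fun j hj => Submodule.smul_mem _ _ (hv j hj))) fun i => ?_
  have hsum : (∑ j ∈ s, (f (x j) / d j) • v j) (x i) = ∑ j ∈ s, (f (x j) / d j) * v j (x i) := by
    simp only [Finset.sum_apply, Pi.smul_apply, smul_eq_mul]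
  rw [Pi.sub_apply, hsum, Finset.sum_congr rfl fun j hj => by rw [hvx j hj i]]
  simp only [mul_ite, mul_zero, Finset.sum_ite_eq]
  split_ifs with hi
  · rw [div_mul_cancel₀ _ (hd i hi), sub_self]
  · rw [hfs i hi, sub_zero]

end Equivariant

theorem linearIndependent_of_apply_eq_ite {ι X R : Type*} [Ring R] [NoZeroDivisors R]
    [DecidableEq ι] {v : ι → X → R} {x : ι → X} {d : ι → R} (hd : ∀ i, d i ≠ 0)
    (hv : ∀ i j, v j (x i) = if i = j then d j else 0) : LinearIndependent R v := by
  rw [linearIndependent_iff']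
  intro s c hsum i hi
  have := congrFun hsum (x i)
  simp only [Finset.sum_apply, Pi.smul_apply, smul_eq_mul, hv, mul_ite, mul_zero,
    Finset.sum_ite_eq, if_pos hi, Pi.zero_apply] at this
  exact (mul_eq_zero.mp this).resolve_right (hd i)

section Cocharacters

variable {G Λ Δ : Type*} [Group G] [AddCommGroup Λ]

def StrictlyDominant (pairing : Δ → Λ →+ ℤ) (l : Λ) : Prop := ∀ α, 0 < pairing α l

theorem map_neg_of_map_add {mm : Λ → G} (hmm : ∀ a b : Λ, mm (a + b) = mm a * mm b) (l : Λ) :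
    mm (-l) = (mm l)⁻¹ :=
  map_inv (MonoidHom.mk' (fun a : Multiplicative Λ => mm a.toAdd) fun a b => hmm a b)
    (Multiplicative.ofAdd l)

theorem inv_mul_mul_mem_of_pairing_nonpos {pairing : Δ → Λ →+ ℤ} {mm : Λ → G}
    (hmm : ∀ a b : Λ, mm (a + b) = mm a * mm b) {Uneg : Δ → Subgroup G} {K : Subgroup G}
    {X : Δ → ℤ → Subgroup G} (hXmono : ∀ α (k k' : ℤ), k ≤ k' → X α k' ≤ X α k)
    (hX0 : ∀ α, X α 0 = Uneg α ⊓ K)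
    (hXconj : ∀ α (k : ℤ) (l : Λ) (u : G),
      u ∈ X α k ↔ mm l * u * (mm l)⁻¹ ∈ X α (k + pairing α l))
    {α : Δ} {l : Λ} {u : G} (hu : u ∈ Uneg α ⊓ K) (hl : pairing α l ≤ 0) :
    (mm l)⁻¹ * u * mm l ∈ K := by
  have hconj := (hXconj α 0 (-l) u).mp (hX0 α ▸ hu)
  rw [map_neg_of_map_add hmm, inv_inv] at hconj
  have hnonneg : (0 : ℤ) ≤ 0 + pairing α (-l) := by rw [map_neg]; omega
  exact (hX0 α ▸ hXmono α 0 _ hnonneg hconj).2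

theorem apply_mm_eq_ite_of_support_subset [DecidableEq Λ] {pairing : Δ → Λ →+ ℤ} {mm : Λ → G}
    {Ubar K : Subgroup G}
    (hdisj : ∀ l l' : Λ, StrictlyDominant pairing l → StrictlyDominant pairing l' →
      mm l' ∈ (Ubar : Set G) * {mm l} * (K : Set G) → l' = l)
    {R : Type*} [Zero R] {v : G → R} {d : R} {l' : Λ} (hl' : StrictlyDominant pairing l')
    (hsupp : Function.support v ⊆ (Ubar : Set G) * {mm l'} * (K : Set G)) (hval : v (mm l') = d)
    (hvanish : ∀ l, ¬ StrictlyDominant pairing l → v (mm l) = 0) (l : Λ) :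
    v (mm l) = if l = l' then d else 0 := by
  split_ifs with hll'
  · rw [hll', hval]
  by_cases hl : StrictlyDominant pairing l
  · by_contra hne
    exact hll' (hdisj l' l hl' hl (hsupp hne))
  · exact hvanish l hl

end Cocharacters

theorem stmt_4_general {G : Type} [Group G] [TopologicalSpace G]
    {Λ Δ : Type} [AddCommGroup Λ] (pairing : Δ → Λ →+ ℤ)
    (mm : Λ → G) (hmm : ∀ a b : Λ, mm (a + b) = mm a * mm b)
    (Ubar K : Subgroup G) (Uneg : Δ → Subgroup G) (hUneg : ∀ α, Uneg α ≤ Ubar)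
    -- filtration of the root subgroups
    (X : Δ → ℤ → Subgroup G)
    (hXmono : ∀ α (k k' : ℤ), k ≤ k' → X α k' ≤ X α k)
    (hX0 : ∀ α, X α 0 = Uneg α ⊓ K)
    (hXconj : ∀ α (k : ℤ) (l : Λ) (u : G),
      u ∈ X α k ↔ mm l * u * (mm l)⁻¹ ∈ X α (k + pairing α l))
    -- Ψ : a smooth nondegenerate character of Ū of conductor 𝔭
    (Ψ : G → ℂ)
    (hcond₁ : ∀ α : Δ, ∃ u ∈ Uneg α ⊓ K, Ψ u ≠ 1)
    -- δ_P̄^{1/2}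
    (δhalf : Λ → ℂ) (hδne : ∀ l, δhalf l ≠ 0)
    -- structure theory: Iwasawa decomposition and its discreteness properties
    (hIwasawa : ∀ g : G, ∃ u ∈ Ubar, ∃ l : Λ, ∃ k ∈ K, g = u * mm l * k)
    (hdisj : ∀ l l' : Λ, (∀ α, 0 < pairing α l) → (∀ α, 0 < pairing α l') →
      mm l' ∈ (Ubar : Set G) * {mm l} * (K : Set G) → l' = l)
    (hfin : ∀ C : Set G, IsCompact C → {l : Λ | mm l ∈ (Ubar : Set G) * C}.Finite)
    -- the space ind_Ū^G(Ψ̄)^K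
    (indK : Set (G → ℂ))
    (hindK : indK = {f : G → ℂ |
      (∀ u ∈ Ubar, ∀ g : G, f (u * g) = (starRingEnd ℂ) (Ψ u) * f g) ∧
      (∀ k ∈ K, ∀ g : G, f (g * k) = f g) ∧
      IsLocallyConstant f ∧
      ∃ C : Set G, IsCompact C ∧ Function.support f ⊆ (Ubar : Set G) * C})
    -- the geometric basis elements φ_λ, λ strictly dominant
    (φ : Λ → G → ℂ)
    (hφmem : ∀ l : Λ, (∀ α, 0 < pairing α l) → φ l ∈ indK)
    (hφsupp : ∀ l : Λ, (∀ α, 0 < pairing α l) →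
      Function.support (φ l) ⊆ (Ubar : Set G) * {mm l} * (K : Set G))
    (hφval : ∀ l : Λ, (∀ α, 0 < pairing α l) → φ l (mm l) = δhalf l) :
    -- (1) f vanishes at m_μ for μ not strictly dominant
    (∀ f ∈ indK, ∀ l : Λ, ¬ (∀ α, 0 < pairing α l) → f (mm l) = 0) ∧
    -- (2) {φ_λ | λ ∈ X_*(A)^{++}} is a ℂ-basis of ind_Ū^G(Ψ̄)^K
    LinearIndependent ℂ (fun l : {l : Λ // ∀ α, 0 < pairing α l} => φ l.1) ∧
    (∀ f ∈ indK, f ∈ Submodule.span ℂ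
      (Set.range fun l : {l : Λ // ∀ α, 0 < pairing α l} => φ l.1)) := by
  classical
  have hW : ∀ f ∈ indK, f ∈ biEquivariantFunctions Ubar K (fun u => starRingEnd ℂ (Ψ u)) := by
    rw [hindK]
    exact fun f hf => ⟨hf.1, hf.2.1⟩
  have hvanish : ∀ f ∈ indK, ∀ l, ¬ StrictlyDominant pairing l → f (mm l) = 0 := by
    intro f hf l hl
    obtain ⟨α, hα⟩ := not_forall.mp hl
    obtain ⟨u, hu, hΨu⟩ := hcond₁ α
    exact biEquivariantFunctions.apply_eq_zero_of_conj_mem (hW f hf) (hUneg α hu.1)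
      (by rwa [Ne, map_eq_one_iff _ (starRingEnd ℂ).injective])
      (inv_mul_mul_mem_of_pairing_nonpos hmm hXmono hX0 hXconj hu (not_lt.mp hα))
  have hφmm : ∀ l', StrictlyDominant pairing l' → ∀ l,
      φ l' (mm l) = if l = l' then δhalf l' else 0 := fun l' hl' =>
    apply_mm_eq_ite_of_support_subset hdisj hl' (hφsupp l' hl') (hφval l' hl')
      (hvanish _ (hφmem l' hl'))
  refine ⟨hvanish, ?_, fun f hf => ?_⟩
  · refine linearIndependent_of_apply_eq_ite (x := fun i => mm i.1) (fun i => hδne i.1)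
      fun i j => ?_
    simp only [hφmm j.1 j.2 i.1, Subtype.ext_iff]
  obtain ⟨-, -, -, C, hC, hsupp⟩ := hindK ▸ hf
  set s := (hfin C hC).toFinset.filter (StrictlyDominant pairing)
  have hs : ∀ l ∈ s, StrictlyDominant pairing l := fun l hl => (Finset.mem_filter.mp hl).2
  have hfs : ∀ l ∉ s, f (mm l) = 0 := by
    intro l hl
    by_cases hdom : StrictlyDominant pairing l
    · exact Function.notMem_support.mp fun h =>
        hl (Finset.mem_filter.mpr ⟨(hfin C hC).mem_toFinset.mpr (hsupp h), hdom⟩)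
    · exact hvanish f hf l hdom
  rw [biEquivariantFunctions.eq_sum_of_apply_eq_ite hIwasawa (fun l _ => hδne l)
    (fun l hl => hW _ (hφmem l (hs l hl))) (fun l hl => hφmm l (hs l hl)) (hW f hf) hfs]
  exact Submodule.sum_mem _ fun l hl =>
    Submodule.smul_mem _ _ (Submodule.subset_span ⟨⟨l, hs l hl⟩, rfl⟩)

theorem stmt_4 {G : Type} [Group G] [TopologicalSpace G]
    {Λ Δ : Type} [AddCommGroup Λ] (pairing : Δ → Λ →+ ℤ)
    (mm : Λ → G) (hmm : ∀ a b : Λ, mm (a + b) = mm a * mm b)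
    (Ubar K I : Subgroup G) (Uneg : Δ → Subgroup G) (hUneg : ∀ α, Uneg α ≤ Ubar)
    -- filtration of the root subgroups
    (X : Δ → ℤ → Subgroup G)
    (hXmono : ∀ α (k k' : ℤ), k ≤ k' → X α k' ≤ X α k)
    (hXU : ∀ α k, X α k ≤ Uneg α)
    (hX0 : ∀ α, X α 0 = Uneg α ⊓ K)
    (hX1 : ∀ α, X α 1 = Uneg α ⊓ I)
    (hXconj : ∀ α (k : ℤ) (l : Λ) (u : G),
      u ∈ X α k ↔ mm l * u * (mm l)⁻¹ ∈ X α (k + pairing α l))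
    -- Ψ : a smooth nondegenerate character of Ū of conductor 𝔭
    (Ψ : G → ℂ)
    (hΨmul : ∀ u ∈ Ubar, ∀ v ∈ Ubar, Ψ (u * v) = Ψ u * Ψ v)
    (hΨunit : ∀ u ∈ Ubar, ‖Ψ u‖ = 1)
    (hcond₁ : ∀ α : Δ, ∃ u ∈ Uneg α ⊓ K, Ψ u ≠ 1)
    (hcond₂ : ∀ α : Δ, ∀ u ∈ Uneg α ⊓ I, Ψ u = 1)
    -- δ_P̄^{1/2}
    (δhalf : Λ → ℂ) (hδne : ∀ l, δhalf l ≠ 0)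
    -- structure theory: Iwasawa decomposition and its discreteness properties
    (hIwasawa : ∀ g : G, ∃ u ∈ Ubar, ∃ l : Λ, ∃ k ∈ K, g = u * mm l * k)
    (hdisj : ∀ l l' : Λ, (∀ α, 0 < pairing α l) → (∀ α, 0 < pairing α l') →
      mm l' ∈ (Ubar : Set G) * {mm l} * (K : Set G) → l' = l)
    (hfin : ∀ C : Set G, IsCompact C → {l : Λ | mm l ∈ (Ubar : Set G) * C}.Finite)
    -- the space ind_Ū^G(Ψ̄)^K
    (indK : Set (G → ℂ))
    (hindK : indK = {f : G → ℂ |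
      (∀ u ∈ Ubar, ∀ g : G, f (u * g) = (starRingEnd ℂ) (Ψ u) * f g) ∧
      (∀ k ∈ K, ∀ g : G, f (g * k) = f g) ∧
      IsLocallyConstant f ∧
      ∃ C : Set G, IsCompact C ∧ Function.support f ⊆ (Ubar : Set G) * C})
    -- the geometric basis elements φ_λ, λ strictly dominant
    (φ : Λ → G → ℂ)
    (hφmem : ∀ l : Λ, (∀ α, 0 < pairing α l) → φ l ∈ indK)
    (hφsupp : ∀ l : Λ, (∀ α, 0 < pairing α l) →
      Function.support (φ l) ⊆ (Ubar : Set G) * {mm l} * (K : Set G))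
    (hφval : ∀ l : Λ, (∀ α, 0 < pairing α l) → φ l (mm l) = δhalf l) :
    -- (1) f vanishes at m_μ for μ not strictly dominant
    (∀ f ∈ indK, ∀ l : Λ, ¬ (∀ α, 0 < pairing α l) → f (mm l) = 0) ∧
    -- (2) {φ_λ | λ ∈ X_*(A)^{++}} is a ℂ-basis of ind_Ū^G(Ψ̄)^K
    LinearIndependent ℂ (fun l : {l : Λ // ∀ α, 0 < pairing α l} => φ l.1) ∧
    (∀ f ∈ indK, f ∈ Submodule.span ℂ
      (Set.range fun l : {l : Λ // ∀ α, 0 < pairing α l} => φ l.1)) :=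
  stmt_4_general pairing mm hmm Ubar K Uneg hUneg X hXmono hX0 hXconj Ψ hcond₁ δhalf hδne hIwasawa
    hdisj hfin indK hindK φ hφmem hφsupp hφval
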